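/- Let T be a two-dimensional regular local ring with maximal ideal n = (x₁, x₂), let t ≥ 2, s ≥ t+1, a ∈ T, w a unit of T, and q = x₂² − a x₁ x₂ − w x₁^{s−t+1}. Then x₁^s ∉ (x₁^t x₂, q) + n^{s+1}. -/

import Mathlib

/-!
Regular local rings are domains, but it is enough to pass to `T ⧸ P` for a prime `P` with
`dim T ⧸ P = 2`: in a Noetherian local domain of dimension `≥ 2` with maximal ideal `(x, y)`,
Krull's height theorem makes `R ⧸ (x)` a local ring of positive dimension with principal maximal
ideal `(y)`, so `y` is regular modulo `x`, and likewise `x` modulo `y`.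

Writing `m = (x, y)`, if `q ∈ m²`, `q ≡ y²` modulo `x` and `q ∈ (y) + m^{d+1}`, then
`x^{n+d} ∉ (x^n y, q) + m^{n+d+1}` by induction on `n` (the theorem is `n = t`, `d = s - t`).
For `n = 0` the ideal is `(y) + m^{d+1}`, which misses `x^d` because `x` is regular modulo `y`.
In a relation `x^{n+d+1} = α x^{n+1} y + β q + μ`, reducing modulo `x` shows that `β` is
divisible by `x` up to a term of `m^{n+d}`; after moving that term into `μ` all summands are
multiples of `x`, since `(x) ∩ m^{k+1} = x m^k`, and cancelling `x` gives a relation for `n`.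
-/

open IsLocalRing Ideal
open scoped nonZeroDivisors

section SpanPair

variable {R : Type*} [CommRing R] {x y q : R}

theorem Ideal.span_pair_pow_succ_le (k : ℕ) :
    span {x, y} ^ (k + 1) ≤ span {y ^ (k + 1)} ⊔ span {x} * span {x, y} ^ k := by
  induction k with
  | zero => simp [span_insert, sup_comm]
  | succ k ih =>
    have hym : span {y} ≤ span {x, y} := span_mono (by simp)
    calc span {x, y} ^ (k + 2) = (span {x} ⊔ span {y}) * span {x, y} ^ (k + 1) := by
          rw [← span_insert, pow_succ']
      _ ≤ span {x} * span {x, y} ^ (k + 1) ⊔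
            span {y} * (span {y ^ (k + 1)} ⊔ span {x} * span {x, y} ^ k) := by
          rw [sup_mul]; gcongr
      _ = span {x} * span {x, y} ^ (k + 1) ⊔
            (span {y ^ (k + 2)} ⊔ span {x} * (span {y} * span {x, y} ^ k)) := by
          rw [mul_sup, span_singleton_mul_span_singleton, ← pow_succ', mul_left_comm]
      _ ≤ span {y ^ (k + 2)} ⊔ span {x} * span {x, y} ^ (k + 1) := by
          rw [pow_succ' (span {x, y}) k]
          refine sup_le le_sup_right (sup_le le_sup_left (le_sup_of_le_right ?_))
          gcongr

theorem Ideal.exists_eq_mul_pow_add_mul_of_mem_span_pair_pow {z : R} {k : ℕ}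
    (hz : z ∈ span {x, y} ^ (k + 1)) :
    ∃ c, ∃ r ∈ span {x, y} ^ k, z = c * y ^ (k + 1) + x * r := by
  obtain ⟨u, hu, v, hv, rfl⟩ := Submodule.mem_sup.mp (span_pair_pow_succ_le k hz)
  obtain ⟨c, rfl⟩ := mem_span_singleton'.mp hu
  obtain ⟨r, hr, rfl⟩ := mem_span_singleton_mul.mp hv
  exact ⟨c, r, hr, rfl⟩

theorem Ideal.mem_of_mul_pow_mem_of_mk_mem_nonZeroDivisors {I : Ideal R}
    (hy : Ideal.Quotient.mk I y ∈ (R ⧸ I)⁰) {z : R} (k : ℕ) (h : z * y ^ k ∈ I) : z ∈ I := by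
  rw [← Quotient.eq_zero_iff_mem, map_mul, map_pow] at h
  rw [← Quotient.eq_zero_iff_mem]
  exact (mul_right_mem_nonZeroDivisors_eq_zero_iff (pow_mem hy k)).mp h

theorem Ideal.exists_eq_mul_of_mem_span_pair_pow
    (hyx : Ideal.Quotient.mk (span {x}) y ∈ (R ⧸ span {x})⁰) {z : R} {k : ℕ}
    (hz : z ∈ span {x, y} ^ (k + 1)) (hzx : z ∈ span {x}) :
    ∃ r ∈ span {x, y} ^ k, z = x * r := by
  obtain ⟨c, r, hr, rfl⟩ := exists_eq_mul_pow_add_mul_of_mem_span_pair_pow hz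
  have hc : c * y ^ (k + 1) ∈ span {x} := by
    simpa using sub_mem hzx (mul_mem_right r _ (mem_span_singleton_self x))
  obtain ⟨c', rfl⟩ :=
    mem_span_singleton'.mp (mem_of_mul_pow_mem_of_mk_mem_nonZeroDivisors hyx _ hc)
  refine ⟨c' * y ^ (k + 1) + r, add_mem ?_ hr, by ring⟩
  exact mul_mem_left _ _ (pow_le_pow_right k.le_succ (pow_mem_pow (subset_span (by simp)) _))

theorem Ideal.pow_notMem_span_singleton_sup_span_pair_pow
    (hxy : Ideal.Quotient.mk (span {y}) x ∈ (R ⧸ span {y})⁰) (hm : span {x, y} ≠ ⊤) (d : ℕ) :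
    x ^ d ∉ span {y} ⊔ span {x, y} ^ (d + 1) := by
  intro h
  obtain ⟨u, hu, v, hv, huv⟩ := Submodule.mem_sup.mp h
  rw [span_pair_comm] at hv
  obtain ⟨c, r, -, rfl⟩ := exists_eq_mul_pow_add_mul_of_mem_span_pair_pow hv
  have h1 : (1 - c * x) * x ^ d ∈ span {y} := by
    rw [show (1 - c * x) * x ^ d = u + y * r by linear_combination -huv]
    exact add_mem hu (mul_mem_right _ _ (mem_span_singleton_self y))
  have h2 : (1 - c * x) + c * x ∈ span {x, y} :=
    add_mem (span_mono (by simp) (mem_of_mul_pow_mem_of_mk_mem_nonZeroDivisors hxy d h1))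
      (mul_mem_left _ _ (subset_span (by simp)))
  exact hm ((eq_top_iff_one _).mpr (by simpa using h2))

theorem Ideal.pow_mem_span_pair_sup_pow_of_pow_succ_mem (hx : x ∈ R⁰)
    (hyx : Ideal.Quotient.mk (span {x}) y ∈ (R ⧸ span {x})⁰)
    (hq2 : q ∈ span {x, y} ^ 2) (hqx : q - y ^ 2 ∈ span {x}) {n d : ℕ}
    (h : x ^ (n + d + 1) ∈ span {x ^ (n + 1) * y, q} ⊔ span {x, y} ^ (n + d + 2)) :
    x ^ (n + d) ∈ span {x ^ n * y, q} ⊔ span {x, y} ^ (n + d + 1) := by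
  obtain ⟨g, hg, μ, hμ, hsum⟩ := Submodule.mem_sup.mp h
  obtain ⟨α, β, rfl⟩ := mem_span_pair.mp hg
  obtain ⟨c, r, -, rfl⟩ := exists_eq_mul_pow_add_mul_of_mem_span_pair_pow hμ
  have hβ : (β + c * y ^ (n + d)) * y ^ 2 ∈ span {x} := by
    rw [show (β + c * y ^ (n + d)) * y ^ 2 =
        -β * (q - y ^ 2) + x * (x ^ (n + d) - α * x ^ n * y - r) by linear_combination hsum]
    exact add_mem (mul_mem_left _ _ hqx) (mul_mem_right _ _ (mem_span_singleton_self x))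
  obtain ⟨b, hb⟩ :=
    mem_span_singleton'.mp (mem_of_mul_pow_mem_of_mk_mem_nonZeroDivisors hyx 2 hβ)
  have hrest : x * (x ^ (n + d) - α * (x ^ n * y) - b * q) ∈ span {x, y} ^ (n + d + 2) := by
    rw [show x * (x ^ (n + d) - α * (x ^ n * y) - b * q) =
        c * y ^ (n + d + 2) + x * r - c * (y ^ (n + d) * q) by linear_combination -hsum - q * hb]
    refine sub_mem hμ (mul_mem_left _ _ ?_)
    rw [pow_add _ (n + d) 2]
    exact mul_mem_mul (pow_mem_pow (subset_span (by simp)) _) hq2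
  obtain ⟨ρ, hρ, hρx⟩ :=
    exists_eq_mul_of_mem_span_pair_pow hyx hrest (mul_mem_right _ _ (mem_span_singleton_self x))
  have hρ' := (mul_cancel_left_mem_nonZeroDivisors hx).mp hρx
  rw [show x ^ (n + d) = α * (x ^ n * y) + b * q + ρ by linear_combination hρ']
  exact Submodule.mem_sup.mpr ⟨_, mem_span_pair.mpr ⟨α, b, rfl⟩, ρ, hρ, rfl⟩

theorem Ideal.pow_notMem_span_pair_sup_pow (hx : x ∈ R⁰)
    (hyx : Ideal.Quotient.mk (span {x}) y ∈ (R ⧸ span {x})⁰)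
    (hxy : Ideal.Quotient.mk (span {y}) x ∈ (R ⧸ span {y})⁰) (hm : span {x, y} ≠ ⊤)
    (hq2 : q ∈ span {x, y} ^ 2) (hqx : q - y ^ 2 ∈ span {x}) {d : ℕ}
    (hqy : q ∈ span {y} ⊔ span {x, y} ^ (d + 1)) (n : ℕ) :
    x ^ (n + d) ∉ span {x ^ n * y, q} ⊔ span {x, y} ^ (n + d + 1) := by
  induction n with
  | zero =>
    intro h
    simp only [pow_zero, one_mul, zero_add] at h
    have hle : span {y, q} ≤ span {y} ⊔ span {x, y} ^ (d + 1) := by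
      rw [span_le, Set.insert_subset_iff, Set.singleton_subset_iff]
      exact ⟨mem_sup_left (mem_span_singleton_self y), hqy⟩
    exact pow_notMem_span_singleton_sup_span_pair_pow hxy hm d (sup_le hle le_sup_right h)
  | succ n ih =>
    intro h
    rw [add_right_comm n 1 d] at h
    exact ih (pow_mem_span_pair_sup_pow_of_pow_succ_mem hx hyx hq2 hqx h)

end SpanPair

theorem PrimeSpectrum.ringKrullDim_quotient_eq_coheight {R : Type*} [CommRing R]
    (P : PrimeSpectrum R) : ringKrullDim (R ⧸ P.asIdeal) = Order.coheight P := by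
  rw [ringKrullDim_quotient, Order.coheight_eq_krullDim_Ici]
  rfl

theorem PrimeSpectrum.exists_le_ringKrullDim_quotient {R : Type*} [CommRing R] {n : ℕ}
    (h : n ≤ ringKrullDim R) : ∃ P : PrimeSpectrum R, n ≤ ringKrullDim (R ⧸ P.asIdeal) := by
  obtain ⟨l, hl⟩ := Order.le_krullDim_iff.mp h
  refine ⟨l.head, ?_⟩
  rw [ringKrullDim_quotient_eq_coheight, ← hl]
  exact_mod_cast Order.length_le_coheight_head

section LocalRing

variable {S : Type*} [CommRing S] [IsLocalRing S]

theorem IsLocalRing.not_isNilpotent_of_maximalIdeal_eq_span_singleton {π : S}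
    (hπ : maximalIdeal S = span {π}) (hdim : 0 < ringKrullDim S) : ¬IsNilpotent π := by
  intro hnil
  have hnilrad : nilradical S = maximalIdeal S :=
    le_antisymm (nilradical_le_prime _)
      (hπ ▸ span_le.mpr (Set.singleton_subset_iff.mpr (mem_nilradical.mpr hnil)))
  have : Ring.KrullDimLE 0 S ∧ IsLocalRing S :=
    ((Ring.krullDimLE_zero_and_isLocalRing_tfae S).out 3 0).mp
      (hnilrad ▸ maximalIdeal.isMaximal S)
  exact (Ring.krullDimLE_iff.mp this.1).not_gt hdim

theorem IsLocalRing.mem_nonZeroDivisors_of_maximalIdeal_eq_span_singleton [IsNoetherianRing S]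
    {π : S} (hπ : maximalIdeal S = span {π}) (hdim : 0 < ringKrullDim S) : π ∈ S⁰ := by
  have hnil := not_isNilpotent_of_maximalIdeal_eq_span_singleton hπ hdim
  refine mem_nonZeroDivisors_iff_right.mpr fun v hv ↦ ?_
  have hpow (k : ℕ) : v ∈ maximalIdeal S ^ k := by
    induction k with
    | zero => simp
    | succ k ih =>
      rw [hπ, span_singleton_pow] at ih ⊢
      obtain ⟨u, rfl⟩ := mem_span_singleton'.mp ih
      by_cases hu : IsUnit u
      · exact absurd ⟨k + 1, by rw [pow_succ, ← hu.mul_right_eq_zero, ← mul_assoc, hv]⟩ hnil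
      · rw [← mem_nonunits_iff, ← mem_maximalIdeal, hπ, mem_span_singleton'] at hu
        obtain ⟨u', rfl⟩ := hu
        exact mem_span_singleton'.mpr ⟨u', by ring⟩
  simpa [iInf_pow_eq_bot_of_isLocalRing _ (maximalIdeal.isMaximal S).ne_top] using
    mem_iInf.mpr hpow

variable [IsNoetherianRing S] {x y : S}

theorem IsLocalRing.mk_mem_nonZeroDivisors_of_maximalIdeal_eq_span_pair
    (hmax : maximalIdeal S = span {x, y}) (hdim : 2 ≤ ringKrullDim S) :
    Ideal.Quotient.mk (span {x}) y ∈ (S ⧸ span {x})⁰ := by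
  have hx : x ∈ maximalIdeal S := hmax ▸ subset_span (by simp)
  have : Nontrivial (S ⧸ span {x}) := Quotient.nontrivial_iff.mpr (span_singleton_ne_top hx)
  have : IsLocalRing (S ⧸ span {x}) := .of_surjective' _ Ideal.Quotient.mk_surjective
  refine mem_nonZeroDivisors_of_maximalIdeal_eq_span_singleton ?_ ?_
  · rw [← map_maximalIdeal_of_surjective _ Ideal.Quotient.mk_surjective, hmax, map_span,
      Set.image_pair, Quotient.eq_zero_iff_mem.mpr (mem_span_singleton_self x), span_insert_zero]
  · have h := height_le_ringKrullDim_quotient_add_one hx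
    rw [maximalIdeal_height_eq_ringKrullDim] at h
    refine lt_of_not_ge fun h0 ↦ ?_
    have : (2 : WithBot ℕ∞) ≤ 0 + 1 := hdim.trans (h.trans (by gcongr))
    norm_num at this

theorem IsLocalRing.pow_notMem_span_pair_sup_maximalIdeal_pow [IsDomain S]
    (hmax : maximalIdeal S = span {x, y}) (hdim : 2 ≤ ringKrullDim S) (n d : ℕ) (a w : S) :
    x ^ (n + d + 1) ∉
      span {x ^ n * y, y ^ 2 - a * x * y - w * x ^ (d + 2)} ⊔ maximalIdeal S ^ (n + d + 2) := by
  have hyx := mk_mem_nonZeroDivisors_of_maximalIdeal_eq_span_pair hmax hdim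
  have hxy :=
    mk_mem_nonZeroDivisors_of_maximalIdeal_eq_span_pair (span_pair_comm (x := x) ▸ hmax) hdim
  have hxm : x ∈ span {x, y} := subset_span (by simp)
  have hym : y ∈ span {x, y} := subset_span (by simp)
  have : Nontrivial (S ⧸ span {y}) :=
    Quotient.nontrivial_iff.mpr (span_singleton_ne_top (hmax ▸ hym : y ∈ maximalIdeal S))
  have hx0 : x ≠ 0 := fun h ↦ nonZeroDivisors.ne_zero hxy (by rw [h, map_zero])
  rw [hmax]
  refine pow_notMem_span_pair_sup_pow (d := d + 1) (mem_nonZeroDivisors_of_ne_zero hx0) hyx hxy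
    (hmax ▸ (maximalIdeal.isMaximal S).ne_top) ?_ ?_ ?_ n
  · refine sub_mem (sub_mem (pow_mem_pow hym 2) ?_) ?_
    · rw [mul_assoc, sq]; exact mul_mem_left _ _ (mul_mem_mul hxm hym)
    · rw [pow_add]; exact mul_mem_left _ _ (mul_mem_left _ _ (pow_mem_pow hxm 2))
  · rw [show y ^ 2 - a * x * y - w * x ^ (d + 2) - y ^ 2 = x * (-(a * y) - w * x ^ (d + 1)) by
      ring]
    exact mul_mem_right _ _ (mem_span_singleton_self x)
  · rw [show y ^ 2 - a * x * y - w * x ^ (d + 2) = y * (y - a * x) + -w * x ^ (d + 2) by ring]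
    exact add_mem (mem_sup_left (mul_mem_right _ _ (mem_span_singleton_self y)))
      (mem_sup_right (mul_mem_left _ _ (pow_mem_pow hxm _)))

end LocalRing

theorem x1_pow_s_not_in
    (T : Type*) [CommRing T] [IsLocalRing T] [IsNoetherianRing T]
    (x₁ x₂ : T) (hgen : maximalIdeal T = Ideal.span {x₁, x₂})
    (hdim : ringKrullDim T = 2)
    (t s : ℕ) (hs : t + 1 ≤ s)
    (a w : T)
    (q : T) (hq : q = x₂ ^ 2 - a * x₁ * x₂ - w * x₁ ^ (s - t + 1)) :
    x₁ ^ s ∉ Ideal.span {x₁ ^ t * x₂, q} + (maximalIdeal T) ^ (s + 1) := by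
  obtain ⟨d, rfl⟩ : ∃ d, s = t + d + 1 := ⟨s - t - 1, by omega⟩
  obtain ⟨P, hP⟩ := PrimeSpectrum.exists_le_ringKrullDim_quotient (n := 2) hdim.ge
  let f := Ideal.Quotient.mk P.asIdeal
  have : IsLocalRing (T ⧸ P.asIdeal) := .of_surjective' f Ideal.Quotient.mk_surjective
  have hmap : (maximalIdeal T).map f = maximalIdeal (T ⧸ P.asIdeal) :=
    map_maximalIdeal_of_surjective f Ideal.Quotient.mk_surjective
  have hmax : maximalIdeal (T ⧸ P.asIdeal) = span {f x₁, f x₂} := by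
    rw [← hmap, hgen, map_span, Set.image_pair]
  intro hmem
  refine pow_notMem_span_pair_sup_maximalIdeal_pow hmax hP t d (f a) (f w) ?_
  have := mem_map_of_mem f hmem
  rw [Submodule.add_eq_sup, Ideal.map_sup, Ideal.map_pow, hmap, map_span, Set.image_pair, hq,
    show t + d + 1 - t + 1 = d + 2 by omega] at this
  simpa using this
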